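/- arXiv:2503.04465 — 3 statements merged into one kernel-verified Lean document; each statement's English description precedes it below -/
import Mathlib

section
/- Let T₀, β, γ₁, γ₂, f₀, g₀ > 0 with γ₁ < γ₂. Let F : [0,T₀] → [0,∞) be antitone, let H : (0,T₀) → [0,∞) be Lebesgue integrable, and let f, g : (0,∞) → (0,∞) be functions such that f(s) ≥ f₀ · exp(−2/(γ₂ s)^β) for all s > 0, f(s) → 0 as s → 0⁺, and g(s) ≤ g₀ · exp(−2/(γ₁ s)^β) for all s > 0. Assume that for all t₁, t₂ with 0 < t₁ < t₂ ≤ T₀ one has f(t₂ − t₁) · F(t₂)² − g(t₂ − t₁) · F(t₁)² ≤ ∫_{t₁}^{t₂} H(τ) dτ. Then for every γ ∈ (0, γ₂ − γ₁) there exists T′ ∈ (0, T₀] such that for all T₁ ∈ (0, T′]: F(T₁) ≤ f₀^{−1/2} · exp(1/(γ T₁)^β) · (∫_0^{T₁} H(τ) dτ)^{1/2}. -/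
/-!
Put `ρ = 1 - γ / γ₂ ∈ (0, 1)`. Since `γ₁ < γ₂ ρ = γ₂ - γ`, the bounds on `f` and `g` give
`g s ≤ f (ρ s)` for small `s`. Along the geometric sequence `tₙ = ρⁿ T₁` the gaps satisfy
`tₙ₊₁ - tₙ₊₂ = ρ (tₙ - tₙ₊₁)`, so the `g`-term of the hypothesis on `[tₙ₊₁, tₙ]` is absorbed by
the `f`-term on `[tₙ₊₂, tₙ₊₁]` and the inequalities telescope to
`f ((1 - ρ) T₁) F(T₁)² ≤ f (ρⁿ (1 - ρ) T₁) F(tₙ)² + ∫_{tₙ}^{T₁} H`.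
As `n → ∞` the first term vanishes (`f → 0` at `0⁺`, `F` is bounded by monotonicity), and the
lower bound on `f` at `(1 - ρ) T₁ = γ T₁ / γ₂` gives the estimate.
-/

open MeasureTheory Set Filter Topology Real

theorem eventually_mul_exp_neg_div_rpow_le {a b β : ℝ} (c d : ℝ) (ha : 0 < a) (hab : a < b)
    (hβ : 0 < β) (hd : 0 < d) :
    ∀ᶠ s in 𝓝[>] 0, c * exp (-(2 / (a * s) ^ β)) ≤ d * exp (-(2 / (b * s) ^ β)) := by
  set k := 2 / a ^ β - 2 / b ^ β
  have hk : 0 < k := sub_pos.2 <|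
    div_lt_div_of_pos_left two_pos (rpow_pos_of_pos ha β) (rpow_lt_rpow ha.le hab hβ)
  have hgrow : Tendsto (fun s : ℝ ↦ d * exp (k * s ^ (-β))) (𝓝[>] 0) atTop :=
    (tendsto_exp_atTop.comp <|
      (tendsto_rpow_neg_nhdsGT_zero (neg_lt_zero.2 hβ)).const_mul_atTop hk).const_mul_atTop hd
  filter_upwards [hgrow.eventually_ge_atTop c, self_mem_nhdsWithin] with s hc (hs : 0 < s)
  have hsplit : -(2 / (b * s) ^ β) = k * s ^ (-β) + -(2 / (a * s) ^ β) := by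
    rw [mul_rpow ha.le hs.le, mul_rpow (ha.trans hab).le hs.le, rpow_neg hs.le]
    simp only [k]
    field_simp
    ring
  rw [hsplit, exp_add, ← mul_assoc]
  exact mul_le_mul_of_nonneg_right hc (exp_pos _).le

theorem le_add_integral_of_le_succ_add_integral {φ t : ℕ → ℝ} {H : ℝ → ℝ}
    (hH : ∀ n, IntervalIntegrable H volume (t n) (t 0))
    (hstep : ∀ n, φ n ≤ φ (n + 1) + ∫ τ in t (n + 1)..t n, H τ) (n : ℕ) :
    φ 0 ≤ φ n + ∫ τ in t n..t 0, H τ := by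
  induction n with
  | zero => simp
  | succ n ih =>
    rw [← intervalIntegral.integral_add_adjacent_intervals
      ((hH (n + 1)).trans (hH n).symm) (hH n)]
    linarith [hstep n]

theorem le_integral_of_le_add_integral {φ t : ℕ → ℝ} {H : ℝ → ℝ} {a b c : ℝ}
    (hH : IntegrableOn H (Icc a b)) (hφ : Tendsto φ atTop (𝓝 0)) (ht : Tendsto t atTop (𝓝 a))
    (ht_mem : ∀ n, t n ∈ Icc a b) (hle : ∀ n, c ≤ φ n + ∫ τ in t n..b, H τ) :
    c ≤ ∫ τ in a..b, H τ := by
  have hab : a ≤ b := (ht_mem 0).1.trans (ht_mem 0).2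
  have hcont := intervalIntegral.continuousOn_primitive_interval_left (μ := volume)
    (uIcc_of_le hab ▸ hH) a (by simp [hab])
  rw [uIcc_of_le hab] at hcont
  have hlim := hφ.add (hcont.tendsto.comp (tendsto_nhdsWithin_iff.2 ⟨ht, .of_forall ht_mem⟩))
  rw [zero_add] at hlim
  exact ge_of_tendsto' hlim hle

theorem mul_sq_le_integral_of_telescoping {F H f g : ℝ → ℝ} {ρ T : ℝ} (hρ₀ : 0 < ρ)
    (hρ₁ : ρ < 1) (hT : 0 < T) (hF : AntitoneOn F (Icc 0 T)) (hH : IntegrableOn H (Icc 0 T))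
    (hf : Tendsto f (𝓝[>] 0) (𝓝 0)) (hgf : ∀ s ∈ Ioc 0 T, g s ≤ f (ρ * s))
    (hstep : ∀ t₁ t₂, 0 < t₁ → t₁ < t₂ → t₂ ≤ T →
      f (t₂ - t₁) * F t₂ ^ 2 - g (t₂ - t₁) * F t₁ ^ 2 ≤ ∫ τ in t₁..t₂, H τ) :
    f ((1 - ρ) * T) * F T ^ 2 ≤ ∫ τ in 0..T, H τ := by
  set t : ℕ → ℝ := fun n ↦ ρ ^ n * T
  have ht₀ : t 0 = T := by simp [t]
  have ht_pos (n : ℕ) : 0 < t n := by positivity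
  have ht_le (n : ℕ) : t n ≤ T := mul_le_of_le_one_left hT.le (pow_le_one₀ hρ₀.le hρ₁.le)
  have ht_mem (n : ℕ) : t n ∈ Icc 0 T := ⟨(ht_pos n).le, ht_le n⟩
  have ht_lim : Tendsto t atTop (𝓝 0) := by
    simpa using (tendsto_pow_atTop_nhds_zero_of_lt_one hρ₀.le hρ₁).mul_const T
  have hgap (n : ℕ) : t n - t (n + 1) = ρ ^ n * ((1 - ρ) * T) := by simp only [t]; ring
  have hgap_pos (n : ℕ) : 0 < t n - t (n + 1) := by
    rw [hgap]; have := sub_pos.2 hρ₁; positivity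
  have hgap_lim : Tendsto (fun n ↦ t n - t (n + 1)) atTop (𝓝[>] 0) :=
    tendsto_nhdsWithin_iff.2
      ⟨by simpa using ht_lim.sub (ht_lim.comp (tendsto_add_atTop_nat 1)), .of_forall hgap_pos⟩
  set φ : ℕ → ℝ := fun n ↦ f (t n - t (n + 1)) * F (t n) ^ 2
  have hφ₀ : φ 0 = f ((1 - ρ) * T) * F T ^ 2 := by
    rw [show φ 0 = f (t 0 - t (0 + 1)) * F (t 0) ^ 2 from rfl, hgap 0, ht₀, pow_zero, one_mul]
  have hφ_step (n : ℕ) : φ n ≤ φ (n + 1) + ∫ τ in t (n + 1)..t n, H τ := by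
    have hobs := hstep (t (n + 1)) (t n) (ht_pos _) (sub_pos.1 (hgap_pos n)) (ht_le n)
    have hcmp := hgf _ ⟨hgap_pos n, by linarith [ht_pos (n + 1), ht_le n]⟩
    rw [show ρ * (t n - t (n + 1)) = t (n + 1) - t (n + 1 + 1) by simp only [t]; ring] at hcmp
    nlinarith [mul_le_mul_of_nonneg_right hcmp (sq_nonneg (F (t (n + 1))))]
  have hF_bdd (n : ℕ) : |F (t n)| ≤ max |F T| |F 0| :=
    abs_le_max_abs_abs (hF (ht_mem n) ⟨hT.le, le_rfl⟩ (ht_le n))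
      (hF ⟨le_rfl, hT.le⟩ (ht_mem n) (ht_pos n).le)
  have hφ_lim : Tendsto φ atTop (𝓝 0) := by
    refine (hf.comp hgap_lim).zero_mul_isBoundedUnder_le <|
      isBoundedUnder_of ⟨max |F T| |F 0| ^ 2, ?_⟩
    simpa using fun n ↦ pow_le_pow_left₀ (abs_nonneg _) (hF_bdd n) 2
  rw [← hφ₀]
  refine le_integral_of_le_add_integral hH hφ_lim ht_lim ht_mem fun n ↦ ?_
  rw [← ht₀]
  refine le_add_integral_of_le_succ_add_integral (fun n ↦ ?_) hφ_step n
  exact (hH.mono_set (uIcc_subset_Icc (ht_mem n) (ht_mem 0))).intervalIntegrable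

theorem le_sqrt_inv_mul_exp_mul_sqrt {c x y I : ℝ} (hc : 0 < c)
    (h : c * exp (-(2 / y)) * x ^ 2 ≤ I) : x ≤ √c⁻¹ * exp (1 / y) * √I := by
  have hexp : exp (2 / y) = exp (1 / y) ^ 2 := by rw [← exp_nat_mul]; ring_nf
  have hsq : x ^ 2 ≤ c⁻¹ * exp (2 / y) * I := calc
    x ^ 2 = c⁻¹ * exp (2 / y) * (c * exp (-(2 / y)) * x ^ 2) := by rw [exp_neg]; field_simp
    _ ≤ c⁻¹ * exp (2 / y) * I := by gcongr
  calc x ≤ √(x ^ 2) := (le_abs_self x).trans_eq (sqrt_sq_eq_abs x).symm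
    _ ≤ √(c⁻¹ * exp (2 / y) * I) := sqrt_le_sqrt hsq
    _ = √c⁻¹ * exp (1 / y) * √I := by
      rw [sqrt_mul (by positivity), sqrt_mul (by positivity), hexp, sqrt_sq (exp_pos _).le]

theorem telescoping_observability_lemma_general
    (T₀ β γ₁ γ₂ f₀ g₀ : ℝ)
    (hT₀ : 0 < T₀) (hβ : 0 < β) (hγ₁ : 0 < γ₁)
    (hf₀ : 0 < f₀)
    (F : ℝ → ℝ) (hF : AntitoneOn F (Set.Icc 0 T₀))
    (H : ℝ → ℝ) (hH : IntegrableOn H (Set.Ioo 0 T₀))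
    (f g : ℝ → ℝ)
    (hflb : ∀ s : ℝ, 0 < s → f₀ * Real.exp (-(2 / (γ₂ * s) ^ β)) ≤ f s)
    (hflim : Filter.Tendsto f (nhdsWithin 0 (Set.Ioi 0)) (nhds 0))
    (hgub : ∀ s : ℝ, 0 < s → g s ≤ g₀ * Real.exp (-(2 / (γ₁ * s) ^ β)))
    (hmain : ∀ t₁ t₂ : ℝ, 0 < t₁ → t₁ < t₂ → t₂ ≤ T₀ →
      f (t₂ - t₁) * F t₂ ^ 2 - g (t₂ - t₁) * F t₁ ^ 2 ≤ ∫ τ in t₁..t₂, H τ) :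
    ∀ γ : ℝ, 0 < γ → γ < γ₂ - γ₁ →
      ∃ T' : ℝ, 0 < T' ∧ T' ≤ T₀ ∧ ∀ T₁ : ℝ, 0 < T₁ → T₁ ≤ T' →
        F T₁ ≤ Real.sqrt f₀⁻¹ * Real.exp (1 / (γ * T₁) ^ β) *
          Real.sqrt (∫ τ in (0:ℝ)..T₁, H τ) := by
  intro γ hγ hγlt
  have hγ₂ : 0 < γ₂ := by linarith
  set ρ := 1 - γ / γ₂
  have hρ₀ : 0 < ρ := sub_pos.2 ((div_lt_one hγ₂).2 (by linarith))
  have hρ₁ : ρ < 1 := sub_lt_self 1 (div_pos hγ hγ₂)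
  obtain ⟨s₀, hs₀, hgf⟩ : ∃ s₀ > 0, ∀ s ∈ Ioc 0 s₀, g s ≤ f (ρ * s) := by
    obtain ⟨s₀, hs₀, hsub⟩ := mem_nhdsGT_iff_exists_Ioc_subset.1 <|
      eventually_mul_exp_neg_div_rpow_le g₀ f₀ hγ₁ (by linarith : γ₁ < γ₂ - γ) hβ hf₀
    refine ⟨s₀, hs₀, fun s hs ↦ (hgub s hs.1).trans ((hsub hs).trans ?_)⟩
    rw [show (γ₂ - γ) * s = γ₂ * (ρ * s) by simp only [ρ]; field_simp]
    exact hflb _ (mul_pos hρ₀ hs.1)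
  refine ⟨min T₀ s₀, lt_min hT₀ hs₀, min_le_left _ _, fun T₁ hT₁ hT₁' ↦ ?_⟩
  have hT₁T₀ : T₁ ≤ T₀ := hT₁'.trans (min_le_left _ _)
  have hobs := mul_sq_le_integral_of_telescoping hρ₀ hρ₁ hT₁
    (hF.mono (Icc_subset_Icc_right hT₁T₀))
    ((integrableOn_Icc_iff_integrableOn_Ioo).2 (hH.mono_set (Ioo_subset_Ioo_right hT₁T₀))) hflim
    (fun s hs ↦ hgf s ⟨hs.1, hs.2.trans (hT₁'.trans (min_le_right _ _))⟩)
    (fun t₁ t₂ h₁ h₁₂ h₂ ↦ hmain t₁ t₂ h₁ h₁₂ (h₂.trans hT₁T₀))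
  have hflb₁ := hflb ((1 - ρ) * T₁) (mul_pos (sub_pos.2 hρ₁) hT₁)
  rw [show γ₂ * ((1 - ρ) * T₁) = γ * T₁ by simp only [ρ]; field_simp; ring] at hflb₁
  exact le_sqrt_inv_mul_exp_mul_sqrt hf₀
    ((mul_le_mul_of_nonneg_right hflb₁ (sq_nonneg _)).trans hobs)

theorem telescoping_observability_lemma
    (T₀ β γ₁ γ₂ f₀ g₀ : ℝ)
    (hT₀ : 0 < T₀) (hβ : 0 < β) (hγ₁ : 0 < γ₁) (hγ₂ : 0 < γ₂)
    (hf₀ : 0 < f₀) (hg₀ : 0 < g₀) (hγ : γ₁ < γ₂)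
    (F : ℝ → ℝ) (hF : AntitoneOn F (Set.Icc 0 T₀)) (hFpos : ∀ t ∈ Set.Icc 0 T₀, 0 ≤ F t)
    (H : ℝ → ℝ) (hH : IntegrableOn H (Set.Ioo 0 T₀)) (hHpos : ∀ τ ∈ Set.Ioo 0 T₀, 0 ≤ H τ)
    (f g : ℝ → ℝ)
    (hfpos : ∀ s : ℝ, 0 < s → 0 < f s) (hgpos : ∀ s : ℝ, 0 < s → 0 < g s)
    (hflb : ∀ s : ℝ, 0 < s → f₀ * Real.exp (-(2 / (γ₂ * s) ^ β)) ≤ f s)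
    (hflim : Filter.Tendsto f (nhdsWithin 0 (Set.Ioi 0)) (nhds 0))
    (hgub : ∀ s : ℝ, 0 < s → g s ≤ g₀ * Real.exp (-(2 / (γ₁ * s) ^ β)))
    (hmain : ∀ t₁ t₂ : ℝ, 0 < t₁ → t₁ < t₂ → t₂ ≤ T₀ →
      f (t₂ - t₁) * F t₂ ^ 2 - g (t₂ - t₁) * F t₁ ^ 2 ≤ ∫ τ in t₁..t₂, H τ) :
    ∀ γ : ℝ, 0 < γ → γ < γ₂ - γ₁ →
      ∃ T' : ℝ, 0 < T' ∧ T' ≤ T₀ ∧ ∀ T₁ : ℝ, 0 < T₁ → T₁ ≤ T' →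
        F T₁ ≤ Real.sqrt f₀⁻¹ * Real.exp (1 / (γ * T₁) ^ β) *
          Real.sqrt (∫ τ in (0:ℝ)..T₁, H τ) :=
  telescoping_observability_lemma_general T₀ β γ₁ γ₂ f₀ g₀ hT₀ hβ hγ₁ hf₀ F hF H hH f g hflb hflim
    hgub hmain
end

section
/- Let T > 0, let f ∈ L²((0,T); ℂ), and let c ∈ ℂ with c ≠ 0. Then the set {ξ ∈ ℝ : ∫_0^T e^{−iξs} f(s) ds = c} is finite. -/
/-!
Since `f` is integrable on a bounded interval, its transform extends to an entire function `G` of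
the frequency, and `G` tends to `0` along the real line by the Riemann–Lebesgue lemma. So for
`c ≠ 0` the real solutions of `G ξ = c` lie in a compact set; infinitely many of them would
accumulate at a real point, and the identity theorem would force `G ≡ c`, contradicting the decay.
-/

open MeasureTheory Set Filter Topology Complex

-- Unlike Mathlib's `𝓕`, there is no factor `2π` in the exponent.
noncomputable def fourierLaplace (μ : Measure ℝ) (f : ℝ → ℂ) (z : ℂ) : ℂ :=
  ∫ s, cexp (-(I * z * s)) * f s ∂μ

section FourierLaplace

variable {μ : Measure ℝ} {f : ℝ → ℂ} {R : ℝ}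

lemma norm_cexp_neg_I_mul_mul_le {z : ℂ} {s r : ℝ} (hz : ‖z‖ ≤ r) (hs : |s| ≤ R) :
    ‖cexp (-(I * z * s))‖ ≤ Real.exp (r * R) := by
  refine (norm_exp_le_exp_norm _).trans (Real.exp_le_exp.mpr ?_)
  calc ‖-(I * z * s)‖ = ‖z‖ * |s| := by simp
    _ ≤ r * R := mul_le_mul hz hs (abs_nonneg s) ((norm_nonneg z).trans hz)

lemma integrable_cexp_neg_I_mul_mul (hμ : ∀ᵐ s ∂μ, |s| ≤ R) (hf : Integrable f μ) (z : ℂ) :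
    Integrable (fun s : ℝ => cexp (-(I * z * s)) * f s) μ :=
  hf.bdd_mul (by fun_prop) <| hμ.mono fun _ hs => norm_cexp_neg_I_mul_mul_le le_rfl hs

theorem differentiable_fourierLaplace (hμ : ∀ᵐ s ∂μ, |s| ≤ R) (hf : Integrable f μ) :
    Differentiable ℂ (fourierLaplace μ f) := by
  intro z₀
  set r := ‖z₀‖ + 1
  have hball : ∀ z ∈ Metric.ball z₀ 1, ‖z‖ ≤ r := fun z hz => by
    have := norm_le_norm_add_norm_sub' z z₀
    rw [Metric.mem_ball, dist_eq_norm] at hz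
    linarith
  have hderiv : ∀ (s : ℝ) (z : ℂ),
      HasDerivAt (fun w : ℂ => cexp (-(I * w * s)) * f s)
        (cexp (-(I * z * s)) * (-(I * s)) * f s) z := fun s z =>
    ((((hasDerivAt_id z).const_mul I).mul_const (s : ℂ)).neg.cexp.mul_const (f s)).congr_deriv
      (by simp)
  have hbound : ∀ᵐ s : ℝ ∂μ, ∀ z ∈ Metric.ball z₀ 1,
      ‖cexp (-(I * z * s)) * (-(I * s)) * f s‖ ≤ Real.exp (r * R) * R * ‖f s‖ := by
    filter_upwards [hμ] with s hs z hz
    rw [norm_mul, norm_mul, norm_neg, norm_mul, norm_I, one_mul, norm_real, Real.norm_eq_abs]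
    gcongr
    exact norm_cexp_neg_I_mul_mul_le (hball z hz) hs
  exact (hasDerivAt_integral_of_dominated_loc_of_deriv_le (Metric.ball_mem_nhds z₀ one_pos)
    (.of_forall fun z => (integrable_cexp_neg_I_mul_mul hμ hf z).aestronglyMeasurable)
    (integrable_cexp_neg_I_mul_mul hμ hf z₀) (by fun_prop) hbound
    (hf.norm.const_mul _) (.of_forall fun s z _ => hderiv s z)).2.differentiableAt

lemma fourierLaplace_restrict {S : Set ℝ} (hS : MeasurableSet S) :
    fourierLaplace (μ.restrict S) f = fourierLaplace μ (S.indicator f) := by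
  ext z
  rw [fourierLaplace, fourierLaplace, ← integral_indicator hS]
  simp only [indicator_mul_right]

theorem tendsto_fourierLaplace_ofReal_cocompact (f : ℝ → ℂ) :
    Tendsto (fun ξ : ℝ => fourierLaplace volume f ξ) (cocompact ℝ) (𝓝 0) := by
  have hscale : Tendsto (fun ξ : ℝ => ξ * (2 * Real.pi)⁻¹) (cocompact ℝ) (cocompact ℝ) :=
    (Homeomorph.mulRight₀ _ (inv_ne_zero (by positivity))).toCocompactMap.cocompact_tendsto'
  refine ((Real.tendsto_integral_exp_smul_cocompact f).comp hscale).congr fun ξ => ?_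
  refine integral_congr_ae (.of_forall fun s => ?_)
  simp only [Circle.smul_def, smul_eq_mul, Real.fourierChar_apply]
  congr 2
  push_cast
  field_simp

end FourierLaplace

lemma Differentiable.eq_const_of_frequently_ofReal_eq {G : ℂ → ℂ} (hG : Differentiable ℂ G)
    {c : ℂ} {x₀ : ℝ} (h : ∃ᶠ x : ℝ in 𝓝[≠] x₀, G x = c) (z : ℂ) : G z = c := by
  have hmap : Tendsto ((↑) : ℝ → ℂ) (𝓝[≠] x₀) (𝓝[≠] (x₀ : ℂ)) :=
    continuous_ofReal.continuousWithinAt.tendsto_nhdsWithin fun _ hy => ofReal_injective.ne hy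
  have hGan : AnalyticOnNhd ℂ G univ := fun z _ => hG.analyticAt z
  exact hGan.eqOn_of_preconnected_of_frequently_eq analyticOnNhd_const isPreconnected_univ
    (mem_univ _) (hmap.frequently h) (mem_univ z)

theorem Differentiable.finite_setOf_ofReal_eq {G : ℂ → ℂ} (hG : Differentiable ℂ G)
    (hlim : Tendsto (fun ξ : ℝ => G ξ) (cocompact ℝ) (𝓝 0)) {c : ℂ} (hc : c ≠ 0) :
    {ξ : ℝ | G ξ = c}.Finite := by
  obtain ⟨K, hK, hsub⟩ := mem_cocompact'.mp (hlim.eventually_ne hc.symm)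
  by_contra hinf
  obtain ⟨x₀, -, hacc⟩ := Set.Infinite.exists_accPt_of_subset_isCompact hinf hK
    (fun ξ hξ => hsub (not_not.mpr hξ))
  have hconst := hG.eq_const_of_frequently_ofReal_eq (accPt_iff_frequently_nhdsNE.mp hacc)
  exact hc (tendsto_const_nhds_iff.mp (hlim.congr fun ξ : ℝ => hconst ξ))

theorem fourier_level_set_finite
    (T : ℝ) (hT : 0 < T) (f : ℝ → ℂ)
    (hf : MemLp f 2 (volume.restrict (Set.Ioo 0 T)))
    (c : ℂ) (hc : c ≠ 0) :
    Set.Finite {ξ : ℝ | ∫ s in (0:ℝ)..T, Complex.exp (-(Complex.I * ξ * s)) * f s = c} := by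
  have hset : {ξ : ℝ | ∫ s in (0:ℝ)..T, cexp (-(I * ξ * s)) * f s = c}
      = {ξ : ℝ | fourierLaplace (volume.restrict (Ioo 0 T)) f ξ = c} := by
    simp only [fourierLaplace, intervalIntegral.integral_of_le hT.le, integral_Ioc_eq_integral_Ioo]
  have hsupp : ∀ᵐ s ∂volume.restrict (Ioo 0 T), |s| ≤ T := by
    filter_upwards [ae_restrict_mem measurableSet_Ioo] with s hs
    exact abs_le.mpr ⟨by linarith [hs.1], hs.2.le⟩
  rw [hset]
  refine (differentiable_fourierLaplace hsupp (hf.integrable one_le_two)).finite_setOf_ofReal_eq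
    ?_ hc
  rw [fourierLaplace_restrict measurableSet_Ioo]
  exact tendsto_fourierLaplace_ofReal_cocompact _
end

section
/- Let c > 0, r ∈ (1/2, 2], and T > 0. Then there exist c′ > 0 and θ > 0 such that for all λ ≥ 0 and all t₁, t₂ with 0 ≤ t₁ < t₂ ≤ T one has exp(−c (λ t₂)^r) ≤ exp(−c′ λ^r (t₂ − t₁)^θ) · exp(−c (λ t₁)^r). In other words, the function φ(s) = exp(−c |s|^r) satisfies the decay hypothesis (H) with parameters c′, r, θ, T. -/
open MeasureTheory Real Set

/-- The characteristic function of a measure on ℝ. -/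
noncomputable def charFun' (μ : Measure ℝ) (s : ℝ) : ℂ :=
  ∫ ξ, Complex.exp (Complex.I * s * ξ) ∂μ

/-- The decay hypothesis (H) with parameters `c, r, θ, T₀`. -/
def HypH (φ : ℝ → ℂ) (c r θ T₀ : ℝ) : Prop :=
  0 < c ∧ 1 / 2 < r ∧ 0 < θ ∧ 0 < T₀ ∧
  ∀ l : ℝ, 0 ≤ l → ∀ t₁ t₂ : ℝ, 0 ≤ t₁ → t₁ < t₂ → t₂ ≤ T₀ →
    ‖φ (l * t₂)‖ ≤
      Real.exp (-(c * l ^ r * (t₂ - t₁) ^ θ)) * ‖φ (l * t₁)‖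

/-!
For `1 ≤ r` the map `t ↦ t ^ r` is superadditive, so `t₂ ^ r - t₁ ^ r ≥ (t₂ - t₁) ^ r`; for
`r ≤ 1` it is concave, so its increment over `[t₁, t₂]` is at least the slope `r t₂ ^ (r - 1)` at
the right end point times `t₂ - t₁`, and `t₂ ^ (r - 1) ≥ T ^ (r - 1)`. Since `t₂ - t₁ ≤ T`, either
bound yields `t₂ ^ r - t₁ ^ r ≥ C (t₂ - t₁) ^ θ` for every `θ ≥ max r 1`, in particular `θ = 2`;
multiplying by `c λ ^ r` and exponentiating gives the claim.
-/

namespace Real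

lemma sub_rpow_le_rpow_sub_rpow {a b r : ℝ} (ha : 0 ≤ a) (hab : a ≤ b) (hr : 1 ≤ r) :
    (b - a) ^ r ≤ b ^ r - a ^ r := by
  have := add_rpow_le_rpow_add ha (sub_nonneg.2 hab) hr
  rw [add_sub_cancel] at this
  linarith

lemma mul_rpow_sub_one_mul_sub_le_rpow_sub_rpow {a b r : ℝ} (ha : 0 ≤ a) (hab : a < b)
    (hr₀ : 0 ≤ r) (hr₁ : r ≤ 1) :
    r * b ^ (r - 1) * (b - a) ≤ b ^ r - a ^ r := by
  have hb : 0 < b := ha.trans_lt hab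
  have hslope : r * b ^ (r - 1) ≤ slope (fun x : ℝ ↦ x ^ r) a b :=
    (concaveOn_rpow hr₀ hr₁).le_slope_of_hasDerivAt ha hb.le hab
      (hasDerivAt_rpow_const (Or.inl hb.ne'))
  rw [slope_def_field, le_div_iff₀ (sub_pos.2 hab)] at hslope
  exact hslope

lemma rpow_sub_mul_rpow_le_rpow {d T p θ : ℝ} (hd : 0 < d) (hdT : d ≤ T) (hpθ : p ≤ θ) :
    T ^ (p - θ) * d ^ θ ≤ d ^ p := by
  have hT : 0 < T := hd.trans_le hdT
  have hratio : T ^ (p - θ) * d ^ (θ - p) ≤ 1 := by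
    rw [← neg_sub, rpow_neg hT.le, inv_mul_le_one₀ (by positivity)]
    exact rpow_le_rpow hd.le hdT (sub_nonneg.2 hpθ)
  calc T ^ (p - θ) * d ^ θ = T ^ (p - θ) * d ^ (θ - p) * d ^ p := by
        rw [mul_assoc, ← rpow_add hd, sub_add_cancel]
    _ ≤ d ^ p := mul_le_of_le_one_left (by positivity) hratio

lemma exists_mul_rpow_sub_le_rpow_sub_rpow {r T θ : ℝ} (hr : 0 < r) (hT : 0 < T) (hrθ : r ≤ θ)
    (hθ : 1 ≤ θ) :
    ∃ C > 0, ∀ t₁ t₂ : ℝ, 0 ≤ t₁ → t₁ < t₂ → t₂ ≤ T → C * (t₂ - t₁) ^ θ ≤ t₂ ^ r - t₁ ^ r := by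
  rcases le_or_gt 1 r with hr₁ | hr₁
  · refine ⟨T ^ (r - θ), by positivity, fun t₁ t₂ ht₁ hlt ht₂ ↦ ?_⟩
    calc T ^ (r - θ) * (t₂ - t₁) ^ θ ≤ (t₂ - t₁) ^ r :=
          rpow_sub_mul_rpow_le_rpow (sub_pos.2 hlt) (by linarith) hrθ
      _ ≤ t₂ ^ r - t₁ ^ r := sub_rpow_le_rpow_sub_rpow ht₁ hlt.le hr₁
  · refine ⟨r * T ^ (r - 1) * T ^ (1 - θ), by positivity, fun t₁ t₂ ht₁ hlt ht₂ ↦ ?_⟩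
    have ht₂_pos : 0 < t₂ := ht₁.trans_lt hlt
    have hT_le : T ^ (r - 1) ≤ t₂ ^ (r - 1) := rpow_le_rpow_of_nonpos ht₂_pos ht₂ (by linarith)
    have hd : T ^ (1 - θ) * (t₂ - t₁) ^ θ ≤ (t₂ - t₁) ^ (1 : ℝ) :=
      rpow_sub_mul_rpow_le_rpow (sub_pos.2 hlt) (by linarith) hθ
    rw [rpow_one] at hd
    calc r * T ^ (r - 1) * T ^ (1 - θ) * (t₂ - t₁) ^ θ
        = r * T ^ (r - 1) * (T ^ (1 - θ) * (t₂ - t₁) ^ θ) := by ring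
      _ ≤ r * t₂ ^ (r - 1) * (t₂ - t₁) := by gcongr
      _ ≤ t₂ ^ r - t₁ ^ r := mul_rpow_sub_one_mul_sub_le_rpow_sub_rpow ht₁ hlt hr.le hr₁.le

lemma exp_neg_mul_mul_rpow_le {c C r θ l t₁ t₂ : ℝ} (hc : 0 ≤ c) (hl : 0 ≤ l) (ht₁ : 0 ≤ t₁)
    (ht₂ : 0 ≤ t₂) (h : C * (t₂ - t₁) ^ θ ≤ t₂ ^ r - t₁ ^ r) :
    exp (-(c * (l * t₂) ^ r)) ≤
      exp (-(c * C * l ^ r * (t₂ - t₁) ^ θ)) * exp (-(c * (l * t₁) ^ r)) := by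
  rw [← exp_add, exp_le_exp, mul_rpow hl ht₂, mul_rpow hl ht₁]
  have := mul_le_mul_of_nonneg_left h (mul_nonneg hc (rpow_nonneg hl r))
  linarith

end Real

theorem stable_distribution_satisfies_hypH
    (c r T : ℝ) (hc : 0 < c) (hr₁ : 1 / 2 < r) (hr₂ : r ≤ 2) (hT : 0 < T) :
    ∃ c' > 0, ∃ θ > 0, ∀ l : ℝ, 0 ≤ l → ∀ t₁ t₂ : ℝ, 0 ≤ t₁ → t₁ < t₂ → t₂ ≤ T →
      Real.exp (-(c * (l * t₂) ^ r)) ≤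
        Real.exp (-(c' * l ^ r * (t₂ - t₁) ^ θ)) * Real.exp (-(c * (l * t₁) ^ r)) := by
  obtain ⟨C, hC, hbound⟩ :=
    exists_mul_rpow_sub_le_rpow_sub_rpow (by linarith) hT hr₂ one_le_two
  -- `θ` elaborates as a natural number, hence the final `rpow_two`.
  refine ⟨c * C, by positivity, 2, two_pos, fun l hl t₁ t₂ ht₁ hlt ht₂ ↦ ?_⟩
  have := exp_neg_mul_mul_rpow_le hc.le hl ht₁ (ht₁.trans hlt.le) (hbound t₁ t₂ ht₁ hlt ht₂)
  rwa [rpow_two] at this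
end
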